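/- arXiv:2006.10331 — 4 statements merged into one kernel-verified Lean document; each statement's English description precedes it below -/
import Mathlib

section
/- Let S be a measurable subset of ℝ^m with finite Lebesgue measure, and let f : ℝ^m → ℝ^n be a map that is Lipschitz with constant L ≥ 0 and differentiable at every point of S. Then the Riemann volume of the image of S under f, computed as the integral over S of the square root of the absolute value of the determinant of J_f(s)ᵀ J_f(s) (where J_f(s) is the Jacobian matrix of f at s), is at most L^m times the Lebesgue measure of S; that is, ∫_S √|det(J_f(s)ᵀ J_f(s))| ds ≤ L^m · ∫_S ds. -/
/-! The Lipschitz bound gives `‖Df(s)‖ ≤ L` for the operator norm at every point, and the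
Jacobian has the same `ℓ²` operator norm as `Df(s)`. Every eigenvalue of the symmetric matrix
`JᵀJ` has absolute value at most `‖JᵀJ‖ = ‖J‖²` (C*-identity), so `|det (JᵀJ)| ≤ L^(2m)`, and the
pointwise bound `√|det (JᵀJ)| ≤ L^m` integrates over `S`. -/

open MeasureTheory Matrix

/-- The Jacobian matrix of `f : ℝ^m → ℝ^n` at a point `s`: the `n × m` matrix of the
Fréchet derivative of `f` at `s`, with respect to the standard orthonormal bases. -/
noncomputable def jacobianMatrix {m n : ℕ}
    (f : EuclideanSpace ℝ (Fin m) → EuclideanSpace ℝ (Fin n))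
    (s : EuclideanSpace ℝ (Fin m)) : Matrix (Fin n) (Fin m) ℝ :=
  LinearMap.toMatrix (EuclideanSpace.basisFun (Fin m) ℝ).toBasis
    (EuclideanSpace.basisFun (Fin n) ℝ).toBasis (fderiv ℝ f s).toLinearMap

open scoped Matrix.Norms.L2Operator

namespace Matrix

variable {𝕜 : Type*} [RCLike 𝕜] {m n : Type*} [Fintype m] [Fintype n] [DecidableEq n]

lemma IsHermitian.abs_eigenvalues_le {A : Matrix n n 𝕜} (hA : A.IsHermitian) (i : n) :
    |hA.eigenvalues i| ≤ ‖A‖ := by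
  have hv : ‖hA.eigenvectorBasis i‖ = 1 := hA.eigenvectorBasis.orthonormal.1 i
  calc |hA.eigenvalues i|
        = ‖(EuclideanSpace.equiv n 𝕜).symm (A *ᵥ hA.eigenvectorBasis i)‖ := by
        rw [hA.mulVec_eigenvectorBasis]
        simp [norm_smul, hv]
    _ ≤ ‖A‖ * ‖hA.eigenvectorBasis i‖ := l2_opNorm_mulVec A _
    _ = ‖A‖ := by rw [hv, mul_one]

lemma IsHermitian.norm_det_le {A : Matrix n n 𝕜} (hA : A.IsHermitian) :
    ‖A.det‖ ≤ ‖A‖ ^ Fintype.card n := by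
  rw [hA.det_eq_prod_eigenvalues, norm_prod, ← Finset.card_univ, ← Finset.prod_const]
  gcongr with i
  simpa using hA.abs_eigenvalues_le i

lemma norm_det_conjTranspose_mul_self_le (A : Matrix m n 𝕜) :
    ‖(Aᴴ * A).det‖ ≤ ‖A‖ ^ (2 * Fintype.card n) := by
  calc ‖(Aᴴ * A).det‖ ≤ ‖Aᴴ * A‖ ^ Fintype.card n :=
        (isHermitian_conjTranspose_mul_self A).norm_det_le
    _ = ‖A‖ ^ (2 * Fintype.card n) := by rw [l2_opNorm_conjTranspose_mul_self, pow_mul, sq]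

lemma sqrt_abs_det_transpose_mul_self_le (A : Matrix m n ℝ) :
    √|(Aᵀ * A).det| ≤ ‖A‖ ^ Fintype.card n := by
  rw [Real.sqrt_le_left (by positivity), ← pow_mul, mul_comm, ← Real.norm_eq_abs,
    ← conjTranspose_eq_transpose_of_trivial]
  exact norm_det_conjTranspose_mul_self_le A

end Matrix

lemma l2_opNorm_jacobianMatrix {m n : ℕ}
    (f : EuclideanSpace ℝ (Fin m) → EuclideanSpace ℝ (Fin n)) (s : EuclideanSpace ℝ (Fin m)) :
    ‖jacobianMatrix f s‖ = ‖fderiv ℝ f s‖ := by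
  rw [l2_opNorm_def, LinearEquiv.trans_apply, toEuclideanLin_eq_toLin_orthonormal, jacobianMatrix,
    Matrix.toLin_toMatrix]
  rfl

theorem riemann_volume_le_of_lipschitz_general {m n : ℕ}
    (S : Set (EuclideanSpace ℝ (Fin m))) (hSfin : volume S < ⊤)
    (f : EuclideanSpace ℝ (Fin m) → EuclideanSpace ℝ (Fin n))
    (L : ℝ) (hL : 0 ≤ L)
    (hLip : ∀ x y, dist (f x) (f y) ≤ L * dist x y) :
    ∫ s in S, Real.sqrt |((jacobianMatrix f s)ᵀ * jacobianMatrix f s).det|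
      ≤ L ^ m * (volume S).toReal := by
  have hfderiv (s) : ‖fderiv ℝ f s‖ ≤ L :=
    norm_fderiv_le_of_lip' ℝ hL (.of_forall fun x ↦ by simpa only [dist_eq_norm] using hLip x s)
  have hbound (s) (_ : s ∈ S) :
      ‖√|((jacobianMatrix f s)ᵀ * jacobianMatrix f s).det|‖ ≤ L ^ m := by
    rw [Real.norm_of_nonneg (Real.sqrt_nonneg _)]
    calc _ ≤ ‖jacobianMatrix f s‖ ^ m := by
          simpa using Matrix.sqrt_abs_det_transpose_mul_self_le (jacobianMatrix f s)
      _ ≤ L ^ m := by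
          rw [l2_opNorm_jacobianMatrix]
          exact pow_le_pow_left₀ (norm_nonneg _) (hfderiv s) m
  exact (le_abs_self _).trans (norm_setIntegral_le_of_norm_le_const hSfin hbound)

/-- If `S ⊆ ℝ^m` is measurable with finite Lebesgue measure and `f : ℝ^m → ℝ^n` is
`L`-Lipschitz and differentiable at every point of `S`, then the Riemann volume
`∫_S √|det(J_f(s)ᵀ J_f(s))| ds` is at most `L^m` times the Lebesgue measure of `S`. -/
theorem riemann_volume_le_of_lipschitz {m n : ℕ}
    (S : Set (EuclideanSpace ℝ (Fin m))) (hS : MeasurableSet S) (hSfin : volume S < ⊤)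
    (f : EuclideanSpace ℝ (Fin m) → EuclideanSpace ℝ (Fin n))
    (L : ℝ) (hL : 0 ≤ L)
    (hLip : ∀ x y, dist (f x) (f y) ≤ L * dist x y)
    (hdiff : ∀ s ∈ S, DifferentiableAt ℝ f s) :
    ∫ s in S, Real.sqrt |((jacobianMatrix f s)ᵀ * jacobianMatrix f s).det|
      ≤ L ^ m * (volume S).toReal :=
  riemann_volume_le_of_lipschitz_general S hSfin f L hL hLip
end

section
/- Let A, B, C, D be points in the Euclidean plane (or in ℝ^n) such that the closed segment from A to C and the closed segment from B to D intersect at a common point P, where P lies strictly between A and C and strictly between B and D. If moreover P does not lie on the segment from A to D or P does not lie on the segment from B to C, then dist(A, D) + dist(B, C) < dist(A, C) + dist(B, D). -/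
/-- Uncrossing inequality: if the segments `AC` and `BD` in `ℝ^n` cross at a point `P`
lying strictly between `A` and `C` and strictly between `B` and `D`, and `P` does not lie
on segment `AD` or does not lie on segment `BC`, then
`dist A D + dist B C < dist A C + dist B D`. -/
theorem uncrossing_dist_lt {n : ℕ}
    (A B C D P : EuclideanSpace ℝ (Fin n))
    (hAC : Sbtw ℝ A P C) (hBD : Sbtw ℝ B P D)
    (hnot : P ∉ segment ℝ A D ∨ P ∉ segment ℝ B C) :
    dist A D + dist B C < dist A C + dist B D := by
  have h1 : dist A P + dist P C = dist A C := hAC.wbtw.dist_add_dist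
  have h2 : dist B P + dist P D = dist B D := hBD.wbtw.dist_add_dist
  have t1 : dist A D ≤ dist A P + dist P D := dist_triangle A P D
  have t2 : dist B C ≤ dist B P + dist P C := dist_triangle B P C
  rcases hnot with h | h
  · have hne : dist A P + dist P D ≠ dist A D := by
      rw [Ne, dist_add_dist_eq_iff]
      exact fun hw => h (mem_segment_iff_wbtw.2 hw)
    have : dist A D < dist A P + dist P D := lt_of_le_of_ne t1 (Ne.symm hne)
    linarith
  · have hne : dist B P + dist P C ≠ dist B C := by
      rw [Ne, dist_add_dist_eq_iff]
      exact fun hw => h (mem_segment_iff_wbtw.2 hw)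
    have : dist B C < dist B P + dist P C := lt_of_le_of_ne t2 (Ne.symm hne)
    linarith
end

section
/- Let x_1, …, x_N be points in ℝ^n. The infimum, over all injective codings c : {1, …, N} → ℝ and all continuous decoding functions f : ℝ → ℝ^n satisfying f(c(i)) = x_i for every i, of the total variation (arc length) of f over the interval [min_i c(i), max_i c(i)], equals the minimum over all permutations σ of {1, …, N} of ∑_{i=2}^{N} dist(x_{σ(i−1)}, x_{σ(i)}), i.e., the length of the shortest Hamiltonian path through x_1, …, x_N. -/
/-! Sorting the code values gives a permutation `σ` along which the coding is monotone, and the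
variation of any decoding `f` dominates the sum of the distances between its successive values
`x (σ i)`: every coding costs at least the Hamiltonian path along `σ`. Conversely, the polygonal
path through `x (σ 0), …, x (σ N)`, visited at the integer times `0, …, N`, decodes the coding
`i ↦ σ⁻¹ i`; on each unit interval it is Lipschitz with constant the length of the corresponding
edge, so its variation is at most the length of the Hamiltonian path. -/

open Set Finset

theorem eVariationOn_Icc_le_of_lipschitzOnWith {E : Type*} [PseudoEMetricSpace E] {f : ℝ → E}
    {C : NNReal} {a b : ℝ}
    (hf : LipschitzOnWith C f (Icc a b)) :
    eVariationOn f (Icc a b) ≤ C * ENNReal.ofReal (b - a) := by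
  simpa using hf.comp_eVariationOn_le (g := id) (mapsTo_id _)

section Polygonal

variable {E : Type*} [SeminormedAddCommGroup E] [NormedSpace ℝ E]

noncomputable def unitRamp (k : ℕ) (t : ℝ) : ℝ := min (max (t - k) 0) 1

theorem continuous_unitRamp (k : ℕ) : Continuous (unitRamp k) := by
  unfold unitRamp; fun_prop

theorem unitRamp_of_le {k : ℕ} {t : ℝ} (ht : t ≤ k) : unitRamp k t = 0 := by
  simp [unitRamp, ht]

theorem unitRamp_of_ge {k : ℕ} {t : ℝ} (ht : k + 1 ≤ t) : unitRamp k t = 1 := by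
  rw [unitRamp, max_eq_left (by linarith), min_eq_right (by linarith)]

theorem unitRamp_of_mem_Icc {k : ℕ} {t : ℝ} (ht : t ∈ Icc (k : ℝ) (k + 1)) :
    unitRamp k t = t - k := by
  rw [unitRamp, max_eq_left (by linarith [ht.1]), min_eq_left (by linarith [ht.2])]

noncomputable def polygonalPath (w : ℕ → E) (N : ℕ) (t : ℝ) : E :=
  w 0 + ∑ k ∈ range N, unitRamp k t • (w (k + 1) - w k)

variable (w : ℕ → E)

theorem continuous_polygonalPath (N : ℕ) : Continuous (polygonalPath w N) := by
  unfold polygonalPath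
  have := continuous_unitRamp
  fun_prop

theorem polygonalPath_succ (N : ℕ) (t : ℝ) :
    polygonalPath w (N + 1) t = polygonalPath w N t + unitRamp N t • (w (N + 1) - w N) := by
  simp only [polygonalPath, sum_range_succ, add_assoc]

theorem polygonalPath_of_le {N : ℕ} {t : ℝ} (ht : N ≤ t) : polygonalPath w N t = w N := by
  have hramp : ∀ k ∈ range N, unitRamp k t • (w (k + 1) - w k) = w (k + 1) - w k := by
    intro k hk
    have : (k : ℝ) + 1 ≤ N := by exact_mod_cast mem_range.1 hk
    rw [unitRamp_of_ge (by linarith), one_smul]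
  rw [polygonalPath, sum_congr rfl hramp, sum_range_sub, add_sub_cancel]

theorem polygonalPath_eq_of_le {M N : ℕ} (hMN : M ≤ N) {t : ℝ} (ht : t ≤ M) :
    polygonalPath w N t = polygonalPath w M t := by
  induction N, hMN using Nat.le_induction with
  | base => rfl
  | succ N hMN ih =>
    have : t ≤ N := ht.trans (by exact_mod_cast hMN)
    rw [polygonalPath_succ, unitRamp_of_le this, zero_smul, add_zero, ih]

theorem polygonalPath_natCast {N j : ℕ} (hj : j ≤ N) : polygonalPath w N j = w j := by
  rw [polygonalPath_eq_of_le w hj le_rfl, polygonalPath_of_le w le_rfl]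

theorem polygonalPath_of_mem_Icc {N m : ℕ} (hm : m < N) {t : ℝ}
    (ht : t ∈ Icc (m : ℝ) (m + 1)) :
    polygonalPath w N t = w m + (t - m) • (w (m + 1) - w m) := by
  rw [polygonalPath_eq_of_le w hm (by exact_mod_cast ht.2), polygonalPath_succ,
    polygonalPath_of_le w ht.1, unitRamp_of_mem_Icc ht]

theorem lipschitzOnWith_polygonalPath {N m : ℕ} (hm : m < N) :
    LipschitzOnWith ‖w (m + 1) - w m‖₊ (polygonalPath w N) (Icc (m : ℝ) (m + 1)) := by
  refine LipschitzOnWith.of_dist_le_mul fun s hs t ht => le_of_eq ?_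
  rw [polygonalPath_of_mem_Icc w hm hs, polygonalPath_of_mem_Icc w hm ht, dist_add_left,
    dist_eq_norm, ← sub_smul, norm_smul, sub_sub_sub_cancel_right, Real.dist_eq,
    Real.norm_eq_abs, coe_nnnorm, mul_comm]

theorem eVariationOn_polygonalPath_le {N m : ℕ} (hm : m ≤ N) :
    eVariationOn (polygonalPath w N) (Icc 0 m) ≤ ∑ k ∈ range m, edist (w k) (w (k + 1)) := by
  induction m with
  | zero => simp
  | succ m ih =>
    have hadd := eVariationOn.Icc_add_Icc (polygonalPath w N) (s := univ)
      (a := 0) (b := m) (c := m + 1) (by positivity) (by simp) (mem_univ _)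
    rw [univ_inter, univ_inter, univ_inter] at hadd
    rw [Nat.cast_succ, ← hadd, sum_range_succ]
    gcongr
    · exact ih (by omega)
    · have := eVariationOn_Icc_le_of_lipschitzOnWith (lipschitzOnWith_polygonalPath w hm)
      rw [edist_comm, edist_eq_enorm_sub, enorm_eq_nnnorm]
      simpa using this

end Polygonal

open Fin.NatCast in
theorem exists_continuous_eVariationOn_le_sum_edist {E : Type*} [SeminormedAddCommGroup E]
    [NormedSpace ℝ E] {N : ℕ} (p : Fin (N + 1) → E) :
    ∃ f : ℝ → E, Continuous f ∧ (∀ i : Fin (N + 1), f (i : ℕ) = p i) ∧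
      eVariationOn f (Icc 0 N) ≤ ∑ i : Fin N, edist (p i.castSucc) (p i.succ) := by
  set w : ℕ → E := fun k => p k
  refine ⟨polygonalPath w N, continuous_polygonalPath w N, fun i => ?_, ?_⟩
  · rw [polygonalPath_natCast w i.is_le]
    simp [w]
  · refine (eVariationOn_polygonalPath_le w le_rfl).trans_eq ?_
    rw [← Fin.sum_univ_eq_sum_range (fun k => edist (w k) (w (k + 1)))]
    refine sum_congr rfl fun i _ => ?_
    simp only [w]
    congr 2 <;> ext <;> simp

theorem sum_edist_le_eVariationOn_of_monotone {α E : Type*} [LinearOrder α]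
    [PseudoEMetricSpace E] {f : α → E} {s : Set α} {N : ℕ} {u : Fin (N + 1) → α}
    (hu : Monotone u) (us : ∀ i, u i ∈ s) :
    ∑ i : Fin N, edist (f (u i.castSucc)) (f (u i.succ)) ≤ eVariationOn f s := by
  set v : ℕ → α := fun k => u ⟨min k N, by omega⟩
  have hv : Monotone v := fun a b hab => hu (Fin.mk_le_mk.2 (min_le_min_right N hab))
  refine le_trans (le_of_eq ?_) (eVariationOn.sum_le (n := N) hv fun k => us _)
  rw [← Fin.sum_univ_eq_sum_range (fun k => edist (f (v (k + 1))) (f (v k)))]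
  refine sum_congr rfl fun i _ => ?_
  rw [edist_comm]
  congr 3 <;> ext <;> simp

theorem iInf_fin_val_eq_zero (N : ℕ) : ⨅ i : Fin (N + 1), ((i : ℕ) : ℝ) = 0 :=
  le_antisymm
    (by simpa using ciInf_le (finite_range fun i : Fin (N + 1) => ((i : ℕ) : ℝ)).bddBelow 0)
    (le_ciInf fun _ => Nat.cast_nonneg _)

theorem iSup_fin_val_eq (N : ℕ) : ⨆ i : Fin (N + 1), ((i : ℕ) : ℝ) = N :=
  le_antisymm (ciSup_le fun i => by exact_mod_cast i.is_le)
    (by simpa using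
      le_ciSup (finite_range fun i : Fin (N + 1) => ((i : ℕ) : ℝ)).bddAbove (Fin.last N))

/-- The infimum, over all injective one-dimensional codings `c` of the points
`x 0, …, x N` and all continuous decoding functions `f : ℝ → ℝ^n` with `f (c i) = x i`,
of the total variation (arc length) of `f` over `[min_i c i, max_i c i]`, equals the
length of the shortest Hamiltonian path through `x 0, …, x N`, i.e. the minimum over
permutations `σ` of `∑_{i=1}^{N} dist (x (σ (i-1))) (x (σ i))`. -/
theorem mmc_one_dim_eq_shortest_hamiltonian_path {n N : ℕ}
    (x : Fin (N + 1) → EuclideanSpace ℝ (Fin n)) :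
    (⨅ (c : Fin (N + 1) → ℝ) (_ : Function.Injective c)
        (f : ℝ → EuclideanSpace ℝ (Fin n)) (_ : Continuous f) (_ : ∀ i, f (c i) = x i),
        eVariationOn f (Set.Icc (⨅ i, c i) (⨆ i, c i)))
      = ⨅ σ : Equiv.Perm (Fin (N + 1)),
          ENNReal.ofReal (∑ i : Fin N, dist (x (σ i.castSucc)) (x (σ i.succ))) := by
  simp only [ENNReal.ofReal_sum_of_nonneg fun _ _ => dist_nonneg, ← edist_dist]
  apply le_antisymm
  · refine le_iInf fun σ => ?_
    obtain ⟨f, hf, hfx, hvar⟩ := exists_continuous_eVariationOn_le_sum_edist (x ∘ σ)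
    set c : Fin (N + 1) → ℝ := fun i => (σ.symm i : ℕ)
    have hc : Function.Injective c :=
      fun i j hij => σ.symm.injective (Fin.ext (Nat.cast_injective hij))
    refine iInf₂_le_of_le c hc <| iInf₂_le_of_le f hf <|
      iInf_le_of_le (fun i => by simpa using hfx (σ.symm i)) ?_
    rwa [σ.symm.iInf_comp (g := fun i : Fin (N + 1) => ((i : ℕ) : ℝ)),
      σ.symm.iSup_comp (g := fun i : Fin (N + 1) => ((i : ℕ) : ℝ)),
      iInf_fin_val_eq_zero, iSup_fin_val_eq]
  · refine le_iInf₂ fun c _ => le_iInf₂ fun f _ => le_iInf fun hfx => ?_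
    refine iInf_le_of_le (Tuple.sort c) ?_
    simpa [hfx] using sum_edist_le_eVariationOn_of_monotone (f := f) (Tuple.monotone_sort c)
      fun i => Set.mem_Icc.2
        ⟨ciInf_le (finite_range c).bddBelow _, le_ciSup (finite_range c).bddAbove _⟩
end

section
/- Let x_1, …, x_N be points in ℝ^n, and let c, c' : {1, …, N} → ℝ be two injective codings inducing the same ordering of the data, i.e., c(i) < c(j) if and only if c'(i) < c'(j) for all i, j. Then the infimum over continuous decoding functions f with f(c(i)) = x_i of the arc length of f over [min_i c(i), max_i c(i)] equals the corresponding infimum for the coding c'. In particular, the one-dimensional coding measure is invariant under any strictly increasing transformation of the codes, such as z-score standardization c ↦ (c − mean(c))/std(c). -/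
/-!
Codings inducing the same (weak) order differ by a continuous monotone reparametrization `φ`
of the line: take `φ t = maxᵢ (c' i - L (c i - t)⁺)` with `L` at least every slope
`(c' i - c' j) / (c i - c j)`. Precomposing a decoding function of `c'` with `φ` yields a
decoding function of `c` whose arc length is no larger, since `φ` is monotone and maps the
code range of `c` into that of `c'`. Exchanging the roles of `c` and `c'` gives equality.
-/

open Set
open scoped ENNReal

theorem exists_continuous_monotone_interpolation {ι : Type*} [Fintype ι] [Nonempty ι]
    (a b : ι → ℝ) (hab : ∀ i j, a i ≤ a j → b i ≤ b j) :
    ∃ φ : ℝ → ℝ, Continuous φ ∧ Monotone φ ∧ ∀ i, φ (a i) = b i := by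
  obtain ⟨M, hM⟩ := Finite.exists_le fun p : ι × ι => (b p.1 - b p.2) / (a p.1 - a p.2)
  set L := max M 0
  have hslope : ∀ i j, a j < a i → b i - b j ≤ L * (a i - a j) := by
    intro i j hji
    rw [← div_le_iff₀ (sub_pos.2 hji)]
    exact (hM (i, j)).trans (le_max_left _ _)
  refine ⟨fun t => Finset.univ.sup' Finset.univ_nonempty fun i => b i - L * max (a i - t) 0,
    ?_, ?_, fun j => ?_⟩
  · fun_prop
  · intro s t hst
    exact Finset.sup'_mono_fun fun i _ => by gcongr
  · refine le_antisymm (Finset.sup'_le _ _ fun i _ => ?_)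
      (Finset.le_sup'_of_le _ (Finset.mem_univ j) (by simp))
    rcases le_or_gt (a i) (a j) with h | h
    · simp [max_eq_right (sub_nonpos.2 h), hab i j h]
    · rw [max_eq_left (sub_pos.2 h).le]
      linarith [hslope i j h]

section CodingMeasure

variable {ι E : Type*} [PseudoEMetricSpace E]

noncomputable def codingMeasure (x : ι → E) (c : ι → ℝ) : ℝ≥0∞ :=
  ⨅ (f : ℝ → E) (_ : Continuous f) (_ : ∀ i, f (c i) = x i),
    eVariationOn f (Icc (⨅ i, c i) (⨆ i, c i))

theorem codingMeasure_le_of_monotone_comp [Finite ι] [Nonempty ι] (x : ι → E)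
    {c c' : ι → ℝ} {φ : ℝ → ℝ} (hφ : Continuous φ) (hφ_mono : Monotone φ)
    (hφc : ∀ i, φ (c i) = c' i) :
    codingMeasure x c ≤ codingMeasure x c' := by
  refine le_iInf₂ fun f hf => le_iInf fun hfx => ?_
  have hdecode : ∀ i, (f ∘ φ) (c i) = x i := fun i => by simp [hφc, hfx]
  refine iInf₂_le_of_le (f ∘ φ) (hf.comp hφ) (iInf_le_of_le hdecode ?_)
  refine eVariationOn.comp_le_of_monotoneOn f φ (hφ_mono.monotoneOn _) fun t ht => ?_
  obtain ⟨i₀, hi₀⟩ := exists_eq_ciInf_of_finite (f := c)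
  obtain ⟨i₁, hi₁⟩ := exists_eq_ciSup_of_finite (f := c)
  constructor
  · calc ⨅ i, c' i ≤ c' i₀ := ciInf_le (Finite.bddBelow_range c') i₀
      _ = φ (⨅ i, c i) := by rw [← hi₀, hφc]
      _ ≤ φ t := hφ_mono ht.1
  · calc φ t ≤ φ (⨆ i, c i) := hφ_mono ht.2
      _ = c' i₁ := by rw [← hi₁, hφc]
      _ ≤ ⨆ i, c' i := le_ciSup (Finite.bddAbove_range c') i₁

theorem codingMeasure_le_of_le_imp_le [Fintype ι] [Nonempty ι] (x : ι → E) {c c' : ι → ℝ}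
    (h : ∀ i j, c i ≤ c j → c' i ≤ c' j) :
    codingMeasure x c ≤ codingMeasure x c' :=
  let ⟨_, hφ, hφ_mono, hφc⟩ := exists_continuous_monotone_interpolation c c' h
  codingMeasure_le_of_monotone_comp x hφ hφ_mono hφc

theorem codingMeasure_eq_of_lt_iff_lt [Fintype ι] [Nonempty ι] (x : ι → E) {c c' : ι → ℝ}
    (h : ∀ i j, c i < c j ↔ c' i < c' j) :
    codingMeasure x c = codingMeasure x c' := by
  have hle : ∀ i j, c i ≤ c j ↔ c' i ≤ c' j := fun i j => by
    simpa only [not_lt] using (h j i).not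
  exact le_antisymm (codingMeasure_le_of_le_imp_le x fun i j => (hle i j).1)
    (codingMeasure_le_of_le_imp_le x fun i j => (hle i j).2)

end CodingMeasure

theorem codingMeasure_invariant_of_same_order_general {n N : ℕ}
    (x : Fin (N + 1) → EuclideanSpace ℝ (Fin n))
    (c c' : Fin (N + 1) → ℝ)
    (horder : ∀ i j, c i < c j ↔ c' i < c' j) :
    (⨅ (f : ℝ → EuclideanSpace ℝ (Fin n)) (_ : Continuous f) (_ : ∀ i, f (c i) = x i),
        eVariationOn f (Set.Icc (⨅ i, c i) (⨆ i, c i)))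
      = ⨅ (f : ℝ → EuclideanSpace ℝ (Fin n)) (_ : Continuous f) (_ : ∀ i, f (c' i) = x i),
          eVariationOn f (Set.Icc (⨅ i, c' i) (⨆ i, c' i)) :=
  codingMeasure_eq_of_lt_iff_lt x horder

/-- If two injective one-dimensional codings `c, c'` of the points `x 0, …, x N`
induce the same ordering of the data (`c i < c j ↔ c' i < c' j` for all `i, j`),
then the infimum over continuous decoding functions `f` (with `f (c i) = x i`) of the
arc length of `f` over `[min_i c i, max_i c i]` equals the corresponding infimum for
`c'`.  In particular, the one-dimensional coding measure is invariant under strictly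
increasing transformations of the codes, such as z-score standardization. -/
theorem codingMeasure_invariant_of_same_order {n N : ℕ}
    (x : Fin (N + 1) → EuclideanSpace ℝ (Fin n))
    (c c' : Fin (N + 1) → ℝ)
    (hc : Function.Injective c) (hc' : Function.Injective c')
    (horder : ∀ i j, c i < c j ↔ c' i < c' j) :
    (⨅ (f : ℝ → EuclideanSpace ℝ (Fin n)) (_ : Continuous f) (_ : ∀ i, f (c i) = x i),
        eVariationOn f (Set.Icc (⨅ i, c i) (⨆ i, c i)))
      = ⨅ (f : ℝ → EuclideanSpace ℝ (Fin n)) (_ : Continuous f) (_ : ∀ i, f (c' i) = x i),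
          eVariationOn f (Set.Icc (⨅ i, c' i) (⨆ i, c' i)) :=
  codingMeasure_invariant_of_same_order_general x c c' horder
end
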